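/- arXiv:1604.02529 — 2 statements merged into one kernel-verified Lean document; each statement's English description precedes it below -/
import Mathlib

section
/- Let γ ∈ ℂ be a nonzero algebraic number that is not a root of unity. Then there exists a place v of the number field ℚ(γ) (archimedean or non-archimedean) such that |γ|_v > 1. -/
/-!
If every place of a number field satisfies `|x|_v ≤ 1`, the finite places make `x` an algebraic
integer, and the infinite places put all its conjugates in the closed unit disc. Its powers are
then algebraic integers of bounded degree with bounded conjugates, hence bounded minimal
polynomials: there are only finitely many of them, so `x` is a root of unity
(`NumberField.Embeddings.pow_eq_one_of_norm_le_one`).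
-/

open NumberField IsDedekindDomain

namespace NumberField

variable {K : Type*} [Field K] [NumberField K]

theorem FinitePlace.mk_le_one_iff (v : HeightOneSpectrum (𝓞 K)) {x : K} :
    FinitePlace.mk v x ≤ 1 ↔ v.valuation K x ≤ 1 := by
  rw [FinitePlace.mk_apply, FinitePlace.norm_embedding', NNReal.coe_le_one,
    ← (WithZeroMulInt.toNNReal_strictMono (HeightOneSpectrum.one_lt_absNorm_nnreal v)).le_iff_le,
    map_one]

theorem isIntegral_of_forall_finitePlace_le_one {x : K} (hx : ∀ w : FinitePlace K, w x ≤ 1) :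
    IsIntegral ℤ x := by
  obtain ⟨r, rfl⟩ := IsDedekindDomain.HeightOneSpectrum.mem_integers_of_valuation_le_one
    (R := 𝓞 K) K x fun v ↦ (FinitePlace.mk_le_one_iff v).mp (hx _)
  exact r.isIntegral_coe

theorem exists_pow_eq_one_of_forall_place_le_one {x : K} (hx₀ : x ≠ 0)
    (hinf : ∀ w : InfinitePlace K, w x ≤ 1) (hfin : ∀ w : FinitePlace K, w x ≤ 1) :
    ∃ n : ℕ, 0 < n ∧ x ^ n = 1 := by
  obtain ⟨n, hn, hxn⟩ := Embeddings.pow_eq_one_of_norm_le_one K ℂ hx₀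
    (isIntegral_of_forall_finitePlace_le_one hfin) fun φ ↦ hinf (InfinitePlace.mk φ)
  exact ⟨n, hn, hxn⟩

end NumberField

open IntermediateField in
theorem stmt_6 (γ : ℂ) (hγ0 : γ ≠ 0) (halg : IsAlgebraic ℚ γ)
    (hru : ¬∃ n : ℕ, 0 < n ∧ γ ^ n = 1) :
    ∃ v : AbsoluteValue ℚ⟮γ⟯ ℝ,
      1 < v ⟨γ, IntermediateField.mem_adjoin_simple_self ℚ γ⟩ := by
  have : FiniteDimensional ℚ ℚ⟮γ⟯ := adjoin.finiteDimensional halg.isIntegral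
  have : NumberField ℚ⟮γ⟯ := ⟨⟩
  set x : ℚ⟮γ⟯ := ⟨γ, mem_adjoin_simple_self ℚ γ⟩
  by_contra! hle
  obtain ⟨n, hn, hxn⟩ := exists_pow_eq_one_of_forall_place_le_one (x := x)
    (fun h ↦ hγ0 congr($h.1)) (fun w ↦ hle w.1) (fun w ↦ hle w.1)
  exact hru ⟨n, hn, congr($hxn.1)⟩
end

section
/- Over a field of positive characteristic the conclusion of the orbit intersection theorem for affine maps fails: in 𝔽_p(t), let Φ₁(x) = t·x − t + 1 and Φ₂(x) = (t+1)·x. Then for all m, n ∈ ℕ₀, Φ₁^m(2) = t^m + 1 and Φ₂^n(1) = (t+1)^n, and the set {(m,n) ∈ ℕ₀² : Φ₁^m(2) = Φ₂^n(1)} equals {(p^k, p^k) : k ∈ ℕ₀}. -/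
/-!
Both maps are affine with a fixed point (1 for Φ₁, 0 for Φ₂), so their iterates are explicit:
Φ₁^m(2) = t^m + 1 and Φ₂^n(1) = (t + 1)^n. Comparing degrees forces m = n. If (t + 1)^n = t^n + 1
with n ≥ 2, the coefficient of t^(n-1) shows p ∣ n, and injectivity of the Frobenius on 𝔽_p[t]
lets one descend from n = p·n' to n'; so n is a power of p.
-/

open Polynomial

theorem iterate_eq_of_eq_mul_sub_add {R : Type*} [CommRing R] {f : R → R} {a c : R}
    (hf : ∀ x, f x = a * (x - c) + c) (m : ℕ) (x : R) :
    f^[m] x = a ^ m * (x - c) + c := by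
  induction m with
  | zero => simp
  | succ m ih =>
    rw [Function.iterate_succ_apply', ih, hf]
    ring

section CharP

variable {R : Type*} [CommRing R] [IsDomain R] {p : ℕ} [Fact p.Prime] [CharP R p]

theorem X_add_one_pow_eq_X_pow_add_one_iff {n : ℕ} :
    (X + 1 : R[X]) ^ n = X ^ n + 1 ↔ ∃ k, n = p ^ k := by
  constructor
  · intro h
    induction n using Nat.strong_induction_on with
    | _ n ih =>
    obtain rfl | rfl | hn := (by omega : n = 0 ∨ n = 1 ∨ 2 ≤ n)
    · simp at h
    · exact ⟨0, rfl⟩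
    · have hcast : (n : R) = 0 := by
        have hcoeff := congrArg (coeff · (n - 1)) h
        simpa [coeff_X_add_one_pow, coeff_X_pow, coeff_one,
          show n - 1 ≠ n by omega, show n - 1 ≠ 0 by omega,
          Nat.choose_symm (show 1 ≤ n by omega)] using hcoeff
      obtain ⟨n', rfl⟩ := (CharP.cast_eq_zero_iff R p n).mp hcast
      -- Freshman's dream turns the identity for p·n' into the p-th power of the one for n'.
      have hfrob : frobenius R[X] p ((X + 1) ^ n') = frobenius R[X] p (X ^ n' + 1) := by
        simp only [frobenius_def, ← pow_mul, mul_comm n' p, h, add_pow_char, one_pow]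
      have hp := (Fact.out : p.Prime).one_lt
      obtain ⟨k, rfl⟩ := ih n' (by nlinarith) (frobenius_inj R[X] p hfrob)
      exact ⟨k + 1, by ring⟩
  · rintro ⟨k, rfl⟩
    rw [add_pow_char_pow, one_pow]

theorem X_pow_add_one_eq_X_add_one_pow_iff {m n : ℕ} :
    (X ^ m + 1 : R[X]) = (X + 1) ^ n ↔ ∃ k, m = p ^ k ∧ n = p ^ k := by
  constructor
  · intro h
    have hmn : m = n := by
      have hdeg := congrArg natDegree h
      rwa [← C_1, natDegree_X_pow_add_C, natDegree_pow_X_add_C] at hdeg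
    subst hmn
    obtain ⟨k, hk⟩ := X_add_one_pow_eq_X_pow_add_one_iff.mp h.symm
    exact ⟨k, hk, hk⟩
  · rintro ⟨k, rfl, rfl⟩
    exact (X_add_one_pow_eq_X_pow_add_one_iff.mpr ⟨k, rfl⟩).symm

end CharP

theorem stmt_19 (p : ℕ) [Fact p.Prime]
    (Φ₁ Φ₂ : RatFunc (ZMod p) → RatFunc (ZMod p))
    (hΦ₁ : ∀ x, Φ₁ x = RatFunc.X * x - RatFunc.X + 1)
    (hΦ₂ : ∀ x, Φ₂ x = (RatFunc.X + 1) * x) :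
    (∀ m : ℕ, Φ₁^[m] 2 = RatFunc.X ^ m + 1) ∧
    (∀ n : ℕ, Φ₂^[n] 1 = (RatFunc.X + 1) ^ n) ∧
    {q : ℕ × ℕ | Φ₁^[q.1] 2 = Φ₂^[q.2] 1} =
      {q : ℕ × ℕ | ∃ k : ℕ, q = (p ^ k, p ^ k)} := by
  have orbit₁ (m : ℕ) : Φ₁^[m] 2 = RatFunc.X ^ m + 1 := by
    rw [iterate_eq_of_eq_mul_sub_add (a := RatFunc.X) (c := 1) (fun x ↦ by rw [hΦ₁]; ring)]
    ring
  have orbit₂ (n : ℕ) : Φ₂^[n] 1 = (RatFunc.X + 1) ^ n := by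
    rw [iterate_eq_of_eq_mul_sub_add (a := RatFunc.X + 1) (c := 0) (fun x ↦ by rw [hΦ₂]; ring)]
    ring
  refine ⟨orbit₁, orbit₂, ?_⟩
  ext ⟨m, n⟩
  rw [Set.mem_ofPred_eq, Set.mem_ofPred_eq, orbit₁, orbit₂, ← RatFunc.algebraMap_X]
  simp only [← map_pow, ← map_one (algebraMap (ZMod p)[X] (RatFunc (ZMod p))), ← map_add,
    (RatFunc.algebraMap_injective (ZMod p)).eq_iff, Prod.mk.injEq]
  exact X_pow_add_one_eq_X_add_one_pow_iff
end
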